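/- arXiv:1902.09220 — 4 statements merged into one kernel-verified Lean document; each statement's English description precedes it below -/
import Mathlib

section
/- Let K be a field of characteristic ≠ 2, let g ∈ K[x] be monic of degree d ≥ 1 and irreducible over K, and let f(x) = x^2 + bx + c be monic quadratic with critical point γ = -b/2. If no element of {(-1)^d · g(f(γ))} ∪ {g(f^n(γ)) : n ≥ 2} is a square in K, then g(f^n(x)) is irreducible over K for all n ≥ 1. -/
/-!
Capelli's lemma in degree two: if `h` is monic irreducible of degree `m` with a root `β`, then
`h(X²)` is irreducible as soon as `β` is not a square in `K(β)`, and since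
`N_{K(β)/K}(β) = (-1)ᵐ h(0)` this is guaranteed by `(-1)ᵐ h(0)` not being a square in `K`.
After translating, `h(f(X))` with `f = (X - γ)² + f(γ)` is irreducible when
`(-1)ᵐ h(f(γ))` is not a square. Applying this to `h = g ∘ fⁿ⁻¹` inductively gives the
theorem; for `n ≥ 2` the degree of `h` is even, so the sign disappears.
-/

open Polynomial IntermediateField

theorem Polynomial.irreducible_taylor_iff {R : Type*} [CommRing R] {p : R[X]} (r : R) :
    Irreducible (taylor r p) ↔ Irreducible p :=
  MulEquiv.irreducible_iff (taylorEquiv r)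

theorem IntermediateField.AdjoinSimple.norm_gen_eq_neg_one_pow_mul_coeff_zero
    {K L : Type*} [Field K] [Field L] [Algebra K L] {x : L} (hx : IsIntegral K x) :
    Algebra.norm K (AdjoinSimple.gen K x) =
      (-1) ^ (minpoly K x).natDegree * (minpoly K x).coeff 0 := by
  rw [← adjoin.powerBasis_gen hx, Algebra.PowerBasis.norm_gen_eq_coeff_zero_minpoly,
    adjoin.powerBasis_dim, adjoin.powerBasis_gen, minpoly_gen]

theorem Polynomial.succ_eq_comp_of_eq_comp_succ {R : Type*} [CommSemiring R] {f : R[X]}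
    {u : ℕ → R[X]} (h0 : u 0 = X) (hsucc : ∀ n, u (n + 1) = f.comp (u n)) (n : ℕ) :
    u (n + 1) = (u n).comp f := by
  induction n with
  | zero => rw [hsucc, h0, X_comp, comp_X]
  | succ n ih => rw [hsucc (n + 1), ih, ← comp_assoc, ← hsucc n, ← ih]

section

variable {K : Type*} [Field K]

theorem Polynomial.irreducible_comp_X_sq {H : K[X]} (hmon : H.Monic) (hirr : Irreducible H)
    (hns : ¬IsSquare ((-1) ^ H.natDegree * H.coeff 0)) :
    Irreducible (H.comp (X ^ 2)) := by
  refine irreducible_comp hmon (monic_X_pow 2) hirr fun E _ _ x hx => ?_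
  have hint : IsIntegral K x := by
    by_contra h
    exact hmon.ne_zero (hx ▸ minpoly.eq_zero h)
  rw [Polynomial.map_pow, map_X]
  refine X_pow_sub_C_irreducible_of_prime Nat.prime_two fun s hs => hns ⟨Algebra.norm K s, ?_⟩
  rw [← hx, ← AdjoinSimple.norm_gen_eq_neg_one_pow_mul_coeff_zero hint, ← hs, sq, map_mul]

theorem Polynomial.Monic.comp_sq_add {h : K[X]} (hmon : h.Monic) (γ δ : K) :
    (h.comp ((X - C γ) ^ 2 + C δ)).Monic := by
  have hq : ((X - C γ) ^ 2 + C δ).Monic := by monicity!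
  refine hmon.comp hq ?_
  rw [natDegree_add_C, Polynomial.natDegree_pow, natDegree_X_sub_C]
  norm_num

theorem Polynomial.even_natDegree_comp_sq_add (h : K[X]) (γ δ : K) :
    Even (h.comp ((X - C γ) ^ 2 + C δ)).natDegree := by
  rw [natDegree_comp, natDegree_add_C, natDegree_pow, natDegree_X_sub_C]
  exact even_two.mul_left _

theorem Polynomial.irreducible_comp_sq_add {h : K[X]} (hmon : h.Monic) (hirr : Irreducible h)
    (γ δ : K) (hns : ¬IsSquare ((-1) ^ h.natDegree * h.eval δ)) :
    Irreducible (h.comp ((X - C γ) ^ 2 + C δ)) := by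
  have hsq : Irreducible ((taylor δ h).comp (X ^ 2)) := by
    refine irreducible_comp_X_sq (hmon.comp_X_add_C δ) ((irreducible_taylor_iff δ).2 hirr) ?_
    rwa [natDegree_taylor, taylor_coeff_zero]
  have hcomp : h.comp ((X - C γ) ^ 2 + C δ) = taylor (-γ) ((taylor δ h).comp (X ^ 2)) := by
    simp only [taylor_apply, comp_assoc, add_comp, pow_comp, X_comp, C_comp, map_neg]
    ring_nf
  rw [hcomp, irreducible_taylor_iff]
  exact hsq

theorem Polynomial.X_sq_add_C_mul_X_add_C_eq (h2 : (2 : K) ≠ 0) (b c : K) :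
    X ^ 2 + C b * X + C c =
      (X - C (-b / 2)) ^ 2 + C ((X ^ 2 + C b * X + C c).eval (-b / 2)) := by
  obtain ⟨e, rfl⟩ : ∃ e, b = 2 * e := ⟨b / 2, by field_simp⟩
  rw [neg_div, mul_div_cancel_left₀ e h2]
  simp only [eval_add, eval_pow, eval_mul, eval_X, eval_C, map_add, map_pow, map_mul, map_neg,
    map_ofNat, eval_ofNat]
  ring

end

open Polynomial in
theorem stmt_7_general {K : Type*} [Field K] (h2 : (2 : K) ≠ 0)
    (g : K[X]) (d : ℕ) (hgdeg : g.natDegree = d)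
    (hgmon : g.Monic) (hgirr : Irreducible g)
    (b c : K) (f : K[X]) (hf : f = X ^ 2 + C b * X + C c)
    (γ : K) (hγ : γ = -b / 2)
    (fiter : ℕ → K[X]) (h0 : fiter 0 = X) (hsucc : ∀ n, fiter (n + 1) = f.comp (fiter n))
    (hsq1 : ¬ IsSquare ((-1 : K) ^ d * g.eval ((fiter 1).eval γ)))
    (hsqn : ∀ n, 2 ≤ n → ¬ IsSquare (g.eval ((fiter n).eval γ))) :
    ∀ n, 1 ≤ n → Irreducible (g.comp (fiter n)) := by
  have hf_sq : f = (X - C γ) ^ 2 + C (f.eval γ) := by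
    rw [hf, hγ]; exact X_sq_add_C_mul_X_add_C_eq h2 b c
  have hiter := succ_eq_comp_of_eq_comp_succ h0 hsucc
  have hstep : ∀ h : K[X], h.Monic → Irreducible h →
      ¬IsSquare ((-1) ^ h.natDegree * h.eval (f.eval γ)) →
      (h.comp f).Monic ∧ Even (h.comp f).natDegree ∧ Irreducible (h.comp f) := by
    intro h hmon hirr hns
    rw [hf_sq]
    exact ⟨hmon.comp_sq_add γ _, even_natDegree_comp_sq_add h γ _,
      irreducible_comp_sq_add hmon hirr γ _ hns⟩
  suffices key : ∀ n, 1 ≤ n → (g.comp (fiter n)).Monic ∧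
      Even (g.comp (fiter n)).natDegree ∧ Irreducible (g.comp (fiter n)) from
    fun n hn => (key n hn).2.2
  refine Nat.le_induction ?_ (fun n hn ih => ?_)
  · rw [hiter, h0, X_comp]
    refine hstep g hgmon hgirr ?_
    rwa [hgdeg, ← X_comp (p := f), ← h0, ← hiter]
  · obtain ⟨hmon, heven, hirr⟩ := ih
    rw [hiter, ← comp_assoc]
    refine hstep _ hmon hirr ?_
    rw [heven.neg_one_pow, one_mul, ← eval_comp, comp_assoc, ← hiter, eval_comp]
    exact hsqn (n + 1) (by omega)

open Polynomial in
theorem stmt_7 {K : Type*} [Field K] (h2 : (2 : K) ≠ 0)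
    (g : K[X]) (d : ℕ) (hd : 1 ≤ d) (hgdeg : g.natDegree = d)
    (hgmon : g.Monic) (hgirr : Irreducible g)
    (b c : K) (f : K[X]) (hf : f = X ^ 2 + C b * X + C c)
    (γ : K) (hγ : γ = -b / 2)
    (fiter : ℕ → K[X]) (h0 : fiter 0 = X) (hsucc : ∀ n, fiter (n + 1) = f.comp (fiter n))
    (hsq1 : ¬ IsSquare ((-1 : K) ^ d * g.eval ((fiter 1).eval γ)))
    (hsqn : ∀ n, 2 ≤ n → ¬ IsSquare (g.eval ((fiter n).eval γ))) :
    ∀ n, 1 ≤ n → Irreducible (g.comp (fiter n)) :=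
  stmt_7_general h2 g d hgdeg hgmon hgirr b c f hf γ hγ fiter h0 hsucc hsq1 hsqn
end

section
/- Let c ≥ 2 be an odd integer, n ≥ 2, N = 2^(n-1) - 1, and suppose a_n(c) = s^2 is a perfect square, where a_1 = 1, a_k = a_{k-1}^2 + c^(2^(k-1)-1). Then there exist coprime integers u, v with c = uv, s + a_{n-1} = v^N, s - a_{n-1} = u^N, and hence v^N - u^N = 2·a_{n-1}(c). -/
/-!
From `a n = a (n-1)^2 + c^N` we get `(s - a (n-1)) * (s + a (n-1)) = c^N`. Since `c` is
coprime to every term of the sequence and `c^N` is odd, the two factors are coprime, so each is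
an `N`-th power in `ℤ` (`N` is odd, so signs cause no trouble), and the two roots multiply to `c`.
-/

theorem IsCoprime.sq_add_pow {R : Type*} [CommRing R] {c x : R} (h : IsCoprime c x) {k : ℕ}
    (hk : k ≠ 0) : IsCoprime c (x ^ 2 + c ^ k) := by
  obtain ⟨j, rfl⟩ := Nat.exists_eq_succ_of_ne_zero hk
  rw [pow_succ' c j]
  exact h.pow_right.add_mul_left_right _

theorem isCoprime_of_eq_sq_add_pow {R : Type*} [CommRing R] (c : R) (a : ℕ → R) (h1 : a 1 = 1)
    (hrec : ∀ n, 2 ≤ n → a n = a (n - 1) ^ 2 + c ^ (2 ^ (n - 1) - 1)) :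
    ∀ m, 1 ≤ m → IsCoprime c (a m) := by
  intro m hm
  induction m, hm using Nat.le_induction with
  | base => rw [h1]; exact isCoprime_one_right
  | succ m hm ih =>
    rw [hrec (m + 1) (by omega), Nat.add_sub_cancel]
    exact ih.sq_add_pow (mersenne_pos.2 hm).ne'

theorem Int.isCoprime_sub_add_of_odd_mul {s b : ℤ} (hodd : Odd ((s - b) * (s + b)))
    (hb : IsCoprime ((s - b) * (s + b)) b) : IsCoprime (s - b) (s + b) := by
  have h2 : IsCoprime (s - b) 2 := Int.isCoprime_two_right.2 (Int.odd_mul.1 hodd).1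
  have h2b : IsCoprime (s - b) (2 * b) := h2.mul_right hb.of_mul_left_left
  rw [show s + b = 2 * b + (s - b) * 1 by ring]
  exact h2b.add_mul_left_right 1

theorem Int.exists_isCoprime_pow_of_sq_eq_sq_add_pow {s b c : ℤ} {N : ℕ} (hN : Odd N)
    (hc : Odd c) (hcb : IsCoprime c b) (h : s ^ 2 = b ^ 2 + c ^ N) :
    ∃ u v : ℤ, IsCoprime u v ∧ c = u * v ∧ s + b = v ^ N ∧ s - b = u ^ N := by
  have hfac : (s - b) * (s + b) = c ^ N := by linear_combination h
  have hcop : IsCoprime (s - b) (s + b) :=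
    Int.isCoprime_sub_add_of_odd_mul (hfac ▸ hc.pow) (hfac ▸ hcb.pow_left)
  obtain ⟨u, hu⟩ := Int.eq_pow_of_mul_eq_pow_odd_left hcop hN hfac
  obtain ⟨v, hv⟩ := Int.eq_pow_of_mul_eq_pow_odd_right hcop hN hfac
  refine ⟨u, v, ?_, ?_, hv, hu⟩
  · exact (IsCoprime.pow_iff hN.pos hN.pos).1 (hu ▸ hv ▸ hcop)
  · exact hN.pow_inj.1 (by rw [mul_pow, ← hu, ← hv, hfac])

theorem stmt_12_general (c : ℤ) (hodd : Odd c) (a : ℕ → ℤ) (h1 : a 1 = 1)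
    (hrec : ∀ n, 2 ≤ n → a n = (a (n - 1)) ^ 2 + c ^ (2 ^ (n - 1) - 1))
    (n : ℕ) (hn : 2 ≤ n) (N : ℕ) (hN : N = 2 ^ (n - 1) - 1)
    (s : ℤ) (hs : s ^ 2 = a n) :
    ∃ u v : ℤ, IsCoprime u v ∧ c = u * v ∧
      s + a (n - 1) = v ^ N ∧ s - a (n - 1) = u ^ N ∧
      v ^ N - u ^ N = 2 * a (n - 1) := by
  have hNodd : Odd N := hN ▸ mersenne_odd.2 (by omega)
  have hcop : IsCoprime c (a (n - 1)) := isCoprime_of_eq_sq_add_pow c a h1 hrec (n - 1) (by omega)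
  obtain ⟨u, v, huv, rfl, hv, hu⟩ :=
    Int.exists_isCoprime_pow_of_sq_eq_sq_add_pow hNodd hodd hcop (hs.trans (hN ▸ hrec n hn))
  exact ⟨u, v, huv, rfl, hv, hu, by linear_combination hu - hv⟩

theorem stmt_12 (c : ℤ) (hc : 2 ≤ c) (hodd : Odd c) (a : ℕ → ℤ) (h1 : a 1 = 1)
    (hrec : ∀ n, 2 ≤ n → a n = (a (n - 1)) ^ 2 + c ^ (2 ^ (n - 1) - 1))
    (n : ℕ) (hn : 2 ≤ n) (N : ℕ) (hN : N = 2 ^ (n - 1) - 1)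
    (s : ℤ) (hspos : 0 < s) (hs : s ^ 2 = a n) :
    ∃ u v : ℤ, IsCoprime u v ∧ c = u * v ∧
      s + a (n - 1) = v ^ N ∧ s - a (n - 1) = u ^ N ∧
      v ^ N - u ^ N = 2 * a (n - 1) :=
  stmt_12_general c hodd a h1 hrec n hn N hN s hs
end

section
/- Let c ≥ 6 be an even integer, n ≥ 2, N = 2^(n-1)-1, and suppose a_n(c) is a perfect square with c = uv as in the associated factorization (u even, u and v coprime, v^N - u^N/4 = a_{n-1}(c)). Setting θ = 2^(1/N), one has (3 - 2√2)^(1/N) < u/(θ^2 v) < (3 + 2√2)^(1/N). In particular c > θ^2 (3 - 2√2)^(1/N) v^2. -/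
/-!
Induction on the recurrence gives `0 < a (m + 1) < 2 c ^ (2 ^ m - 1)`, hence, as `c ≥ 4`,
`a (n - 1) ^ 2 < c ^ N = u ^ N v ^ N`. With `U = u ^ N`, `V = v ^ N` the factorization reads
`4 V - U = 4 a (n - 1)`, so `(4 V - U) ^ 2 < 16 U V`, i.e. `x = U / (4 V)` satisfies
`x ^ 2 - 6 x + 1 < 0` and lies strictly between the roots `3 ± 2√2`. Since `θ ^ (2 N) = 4`,
`x` is the `N`-th power of `u / (θ ^ 2 v) > 0`, and taking `N`-th roots gives the bounds.
-/

open Set Real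

lemma pow_two_pow_succ_sub_one {M : Type*} [Monoid M] (c : M) (m : ℕ) :
    c ^ (2 ^ (m + 1) - 1) = c * (c ^ (2 ^ m - 1)) ^ 2 := by
  have : 2 ^ (m + 1) - 1 = 1 + (2 ^ m - 1) * 2 := by
    have := Nat.one_le_two_pow (n := m); rw [pow_succ]; omega
  rw [this, pow_add, pow_one, pow_mul]

section Recurrence

variable {c : ℤ} {a : ℕ → ℤ} (hc : 4 ≤ c) (h1 : a 1 = 1)
  (hrec : ∀ k, 2 ≤ k → a k = a (k - 1) ^ 2 + c ^ (2 ^ (k - 1) - 1))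
include hc h1 hrec

lemma pos_and_lt_two_mul_pow (m : ℕ) :
    0 < a (m + 1) ∧ a (m + 1) < 2 * c ^ (2 ^ m - 1) := by
  induction m with
  | zero => simp [h1]
  | succ m ih =>
    have hP : 0 < c ^ (2 ^ m - 1) := by positivity
    have hsq : a (m + 1) ^ 2 < 4 * (c ^ (2 ^ m - 1)) ^ 2 := by nlinarith [ih.1, ih.2]
    rw [hrec (m + 2) (by omega), show m + 2 - 1 = m + 1 by omega, pow_two_pow_succ_sub_one]
    constructor <;> nlinarith [ih.1]

lemma sq_lt_pow (m : ℕ) : a (m + 1) ^ 2 < c ^ (2 ^ (m + 1) - 1) := by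
  obtain ⟨hpos, hlt⟩ := pos_and_lt_two_mul_pow hc h1 hrec m
  have hP : 0 < c ^ (2 ^ m - 1) := by positivity
  rw [pow_two_pow_succ_sub_one]
  nlinarith

end Recurrence

lemma mem_Ioo_of_sq_one_sub_lt {x : ℝ} (h : (1 - x) ^ 2 < 4 * x) :
    x ∈ Ioo (3 - 2 * √2) (3 + 2 * √2) := by
  have h8 : (x - 3) ^ 2 < (2 * √2) ^ 2 := by
    rw [mul_pow, sq_sqrt zero_le_two]; linarith
  have := abs_lt.mp (abs_lt_of_sq_lt_sq h8 (by positivity))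
  constructor <;> linarith [this.1, this.2]

lemma div_mem_Ioo_of_sq_sub_lt {U V : ℝ} (hV : V ≠ 0) (h : (4 * V - U) ^ 2 < 16 * U * V) :
    U / (4 * V) ∈ Ioo (3 - 2 * √2) (3 + 2 * √2) := by
  set x := U / (4 * V)
  have hU : U = 4 * V * x := by simp only [x]; field_simp
  have hV2 : 0 < 16 * V ^ 2 := by positivity
  refine mem_Ioo_of_sq_one_sub_lt (lt_of_mul_lt_mul_left ?_ hV2.le)
  rw [hU] at h
  linarith

lemma mem_Ioo_rpow_inv_of_pow_mem_Ioo {x L M : ℝ} {N : ℕ} (hN : N ≠ 0) (hx : 0 ≤ x)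
    (hL : 0 ≤ L) (h : x ^ N ∈ Ioo L M) : x ∈ Ioo (L ^ (N⁻¹ : ℝ)) (M ^ (N⁻¹ : ℝ)) := by
  have hN' : (0 : ℝ) < N := by positivity
  have hM : 0 ≤ M := hL.trans (h.1.trans h.2).le
  rw [mem_Ioo, rpow_inv_lt_iff_of_pos hL hx hN', lt_rpow_inv_iff_of_pos hx hM hN',
    rpow_natCast]
  exact h

lemma div_rpow_inv_sq_mul_pow {N : ℕ} (hN : N ≠ 0) (u v : ℝ) :
    (u / (((2 : ℝ) ^ (N⁻¹ : ℝ)) ^ 2 * v)) ^ N = u ^ N / (4 * v ^ N) := by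
  rw [div_pow, mul_pow, pow_right_comm, rpow_inv_natCast_pow zero_le_two hN]
  norm_num

theorem stmt_18_general (c : ℤ) (hc : 6 ≤ c)
    (a : ℕ → ℤ) (h1 : a 1 = 1)
    (hrec : ∀ k, 2 ≤ k → a k = (a (k - 1)) ^ 2 + c ^ (2 ^ (k - 1) - 1))
    (n : ℕ) (hn : 2 ≤ n) (N : ℕ) (hN : N = 2 ^ (n - 1) - 1)
    (θ : ℝ) (hθ : θ = (2 : ℝ) ^ ((1 : ℝ) / N))
    (u v : ℤ) (hc' : c = u * v)
    (hfac : (v : ℚ) ^ N - (1 / 4) * (u : ℚ) ^ N = (a (n - 1) : ℚ)) :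
    ((3 : ℝ) - 2 * Real.sqrt 2) ^ ((1 : ℝ) / N) < (u : ℝ) / (θ ^ 2 * v) ∧
      (u : ℝ) / (θ ^ 2 * v) < ((3 : ℝ) + 2 * Real.sqrt 2) ^ ((1 : ℝ) / N) ∧
      θ ^ 2 * ((3 : ℝ) - 2 * Real.sqrt 2) ^ ((1 : ℝ) / N) * (v : ℝ) ^ 2 < (c : ℝ) := by
  obtain ⟨m, rfl⟩ : ∃ m, n = m + 2 := ⟨n - 2, by omega⟩
  rw [show m + 2 - 1 = m + 1 by omega] at hN hfac
  rw [one_div] at hθ ⊢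
  have hN0 : N ≠ 0 := by have := Nat.one_le_two_pow (n := m); rw [hN, pow_succ]; omega
  have hA : a (m + 1) ^ 2 < u ^ N * v ^ N := by
    rw [← mul_pow, ← hc', hN]; exact sq_lt_pow (by omega) h1 hrec m
  have hfacR : 4 * (v : ℝ) ^ N - (u : ℝ) ^ N = 4 * a (m + 1) := by
    have : 4 * (v : ℚ) ^ N - (u : ℚ) ^ N = 4 * a (m + 1) := by linarith
    exact_mod_cast this
  have huv : (0 : ℝ) < u * v := by exact_mod_cast hc' ▸ (by omega : 0 < c)
  have hv : (v : ℝ) ≠ 0 := by rintro h; simp [h] at huv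
  have hx := div_mem_Ioo_of_sq_sub_lt (pow_ne_zero N hv) (U := (u : ℝ) ^ N) <| by
    have : ((a (m + 1) : ℝ)) ^ 2 < (u : ℝ) ^ N * (v : ℝ) ^ N := by exact_mod_cast hA
    rw [hfacR]; linarith
  have hθ0 : θ ≠ 0 := by rw [hθ]; positivity
  have hpos : 0 ≤ (u : ℝ) / (θ ^ 2 * v) := by
    rw [show (u : ℝ) / (θ ^ 2 * v) = u * v / (θ ^ 2 * v ^ 2) by field_simp]; positivity
  have hL : 0 ≤ 3 - 2 * √2 := by
    nlinarith [sq_nonneg (√2 - 1), sq_sqrt (zero_le_two : (0 : ℝ) ≤ 2)]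
  obtain ⟨hlo, hhi⟩ := mem_Ioo_rpow_inv_of_pow_mem_Ioo hN0 hpos hL
    (hθ ▸ div_rpow_inv_sq_mul_pow hN0 _ _ ▸ hx)
  refine ⟨hlo, hhi, ?_⟩
  calc θ ^ 2 * (3 - 2 * √2) ^ (N⁻¹ : ℝ) * (v : ℝ) ^ 2
      < θ ^ 2 * ((u : ℝ) / (θ ^ 2 * v)) * (v : ℝ) ^ 2 := by gcongr
    _ = (c : ℝ) := by rw [hc']; push_cast; field_simp

theorem stmt_18 (c : ℤ) (hc : 6 ≤ c) (hceven : Even c)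
    (a : ℕ → ℤ) (h1 : a 1 = 1)
    (hrec : ∀ k, 2 ≤ k → a k = (a (k - 1)) ^ 2 + c ^ (2 ^ (k - 1) - 1))
    (n : ℕ) (hn : 2 ≤ n) (N : ℕ) (hN : N = 2 ^ (n - 1) - 1)
    (θ : ℝ) (hθ : θ = (2 : ℝ) ^ ((1 : ℝ) / N))
    (hsq : IsSquare (a n))
    (u v : ℤ) (huv : IsCoprime u v) (hu : Even u) (hc' : c = u * v)
    (hfac : (v : ℚ) ^ N - (1 / 4) * (u : ℚ) ^ N = (a (n - 1) : ℚ)) :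
    ((3 : ℝ) - 2 * Real.sqrt 2) ^ ((1 : ℝ) / N) < (u : ℝ) / (θ ^ 2 * v) ∧
      (u : ℝ) / (θ ^ 2 * v) < ((3 : ℝ) + 2 * Real.sqrt 2) ^ ((1 : ℝ) / N) ∧
      θ ^ 2 * ((3 : ℝ) - 2 * Real.sqrt 2) ^ ((1 : ℝ) / N) * (v : ℝ) ^ 2 < (c : ℝ) :=
  stmt_18_general c hc a h1 hrec n hn N hN θ hθ u v hc' hfac
end

section
/- Let x < y be positive real numbers and M ≥ 1 an integer. Define z = (xy)^M / (x^(2M) + x^(2M-1)y + ... + y^(2M)) (sum of x^j y^(2M-j) for j = 0..2M in the denominator). Then z ≤ 1/(2M+1), and moreover (xy/(y-x)^2)·(1 - (2M+1)z) ≤ M(M+1)/2. -/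
open Finset

/- Write S_d = ∑_{j ≤ d} x^j y^(d-j), so that S_{d+2} = x^(d+2) + xy S_d + y^(d+2). The gap
G_M = S_{2M} - (2M+1)(xy)^M then satisfies G_{M+1} = (y^(M+1) - x^(M+1))^2 + xy G_M, so G_M ≥ 0, which
is the first bound. For the second, the new square is controlled by xy (y^n - x^n)^2 ≤ n (y-x)^2 S_{2n}:
factor y^n - x^n = (y-x) ∑_{i<n} x^i y^(n-1-i), apply Cauchy–Schwarz, and recognise
xy ∑_{i<n} x^(2i) y^(2n-2-2i) as the odd-index part of S_{2n}. As xy S_{2M} ≤ S_{2M+2}, these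
contributions add up along the induction to (1 + 2 + ⋯ + M)(y-x)^2 S_{2M}. -/

section

variable {R : Type*} [CommRing R]

def geomSum₂ (x y : R) (d : ℕ) : R := ∑ j ∈ range (d + 1), x ^ j * y ^ (d - j)

@[simp]
lemma geomSum₂_zero (x y : R) : geomSum₂ x y 0 = 1 := by
  simp [geomSum₂]

lemma geomSum₂_add_two (x y : R) (d : ℕ) :
    geomSum₂ x y (d + 2) = x ^ (d + 2) + x * y * geomSum₂ x y d + y ^ (d + 2) := by
  rw [geomSum₂, sum_range_succ, sum_range_succ', geomSum₂, mul_sum]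
  have hshift : ∀ j ∈ range (d + 1),
      x ^ (j + 1) * y ^ (d + 2 - (j + 1)) = x * y * (x ^ j * y ^ (d - j)) := by
    intro j hj
    rw [show d + 2 - (j + 1) = d - j + 1 by have := mem_range.1 hj; omega]
    ring
  rw [sum_congr rfl hshift]
  simp only [Nat.sub_self, Nat.sub_zero, pow_zero, mul_one, one_mul]
  ring

variable [LinearOrder R] [IsStrictOrderedRing R]

lemma sum_range_odd_le {f : ℕ → R} (hf : ∀ j, 0 ≤ f j) (n : ℕ) :
    ∑ i ∈ range n, f (2 * i + 1) ≤ ∑ j ∈ range (2 * n + 1), f j := by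
  induction n with
  | zero => simpa using hf 0
  | succ n ih =>
    rw [sum_range_succ, show 2 * (n + 1) + 1 = 2 * n + 1 + 1 + 1 by ring, sum_range_succ,
      sum_range_succ]
    linarith [hf (2 * n + 1 + 1)]

variable {x y : R}

lemma mul_pow_le_geomSum₂ (hx : 0 ≤ x) (hy : 0 ≤ y) (n : ℕ) :
    (2 * n + 1) * (x * y) ^ n ≤ geomSum₂ x y (2 * n) := by
  induction n with
  | zero => simp
  | succ n ih =>
    rw [show 2 * (n + 1) = 2 * n + 2 by ring, geomSum₂_add_two]
    have hxy := mul_le_mul_of_nonneg_left ih (mul_nonneg hx hy)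
    push_cast
    linear_combination hxy + sq_nonneg (y ^ (n + 1) - x ^ (n + 1))

lemma mul_sq_sub_pow_le (hx : 0 ≤ x) (hy : 0 ≤ y) (n : ℕ) :
    x * y * (y ^ n - x ^ n) ^ 2 ≤ n * (y - x) ^ 2 * geomSum₂ x y (2 * n) := by
  have hcs := sq_sum_le_card_mul_sum_sq (s := range n) (f := fun i => x ^ i * y ^ (n - 1 - i))
  rw [card_range] at hcs
  have hodd : x * y * ∑ i ∈ range n, (x ^ i * y ^ (n - 1 - i)) ^ 2
      = ∑ i ∈ range n, x ^ (2 * i + 1) * y ^ (2 * n - (2 * i + 1)) := by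
    rw [mul_sum]
    refine sum_congr rfl fun i hi => ?_
    rw [show 2 * n - (2 * i + 1) = 2 * (n - 1 - i) + 1 by have := mem_range.1 hi; omega]
    ring
  have hodd_le := sum_range_odd_le (f := fun j => x ^ j * y ^ (2 * n - j))
    (fun j => by positivity) n
  calc x * y * (y ^ n - x ^ n) ^ 2
      = (y - x) ^ 2 * (x * y * (∑ i ∈ range n, x ^ i * y ^ (n - 1 - i)) ^ 2) := by
        linear_combination
          x * y * (y ^ n - x ^ n + (∑ i ∈ range n, x ^ i * y ^ (n - 1 - i)) * (y - x))
            * geom_sum₂_mul x y n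
    _ ≤ (y - x) ^ 2 * (x * y * (n * ∑ i ∈ range n, (x ^ i * y ^ (n - 1 - i)) ^ 2)) := by
        gcongr
    _ = n * (y - x) ^ 2 * ∑ i ∈ range n, x ^ (2 * i + 1) * y ^ (2 * n - (2 * i + 1)) := by
        rw [← hodd]; ring
    _ ≤ n * (y - x) ^ 2 * geomSum₂ x y (2 * n) := by
        gcongr
        exact hodd_le

lemma two_mul_mul_geomSum₂_sub_le (hx : 0 ≤ x) (hy : 0 ≤ y) (n : ℕ) :
    2 * (x * y) * (geomSum₂ x y (2 * n) - (2 * n + 1) * (x * y) ^ n)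
      ≤ n * (n + 1) * (y - x) ^ 2 * geomSum₂ x y (2 * n) := by
  induction n with
  | zero => simp
  | succ n ih =>
    rw [show 2 * (n + 1) = 2 * n + 2 by ring, geomSum₂_add_two]
    have hxy : 0 ≤ x * y := mul_nonneg hx hy
    have hsq := mul_sq_sub_pow_le hx hy (n + 1)
    rw [show 2 * (n + 1) = 2 * n + 2 by ring, geomSum₂_add_two] at hsq
    have hstep := mul_le_mul_of_nonneg_left ih hxy
    have hmono : x * y * geomSum₂ x y (2 * n)
        ≤ x ^ (2 * n + 2) + x * y * geomSum₂ x y (2 * n) + y ^ (2 * n + 2) := by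
      linarith [pow_nonneg hx (2 * n + 2), pow_nonneg hy (2 * n + 2)]
    have hgrow := mul_le_mul_of_nonneg_left hmono
      (by positivity : (0 : R) ≤ n * (n + 1) * (y - x) ^ 2)
    push_cast at hsq ⊢
    linear_combination 2 * hsq + hstep + hgrow

end

theorem stmt_19_general (x y : ℝ) (hx : 0 < x) (hxy : x < y) (M : ℕ)
    (z : ℝ)
    (hz : z = (x * y) ^ M / (∑ j ∈ Finset.range (2 * M + 1), x ^ j * y ^ (2 * M - j))) :
    z ≤ 1 / (2 * M + 1) ∧
      (x * y / (y - x) ^ 2) * (1 - (2 * M + 1) * z) ≤ M * (M + 1) / 2 := by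
  have hy : 0 < y := hx.trans hxy
  have hz' : z = (x * y) ^ M / geomSum₂ x y (2 * M) := hz
  have hlow := mul_pow_le_geomSum₂ hx.le hy.le M
  have hgap := two_mul_mul_geomSum₂_sub_le hx.le hy.le M
  have hS : 0 < geomSum₂ x y (2 * M) := lt_of_lt_of_le (by positivity) hlow
  have hyx : 0 < (y - x) ^ 2 := pow_pos (sub_pos.2 hxy) 2
  constructor
  · rw [hz', div_le_div_iff₀ hS (by positivity)]
    linarith
  · rw [hz', mul_div_assoc', one_sub_div hS.ne', div_mul_div_comm,
      div_le_div_iff₀ (mul_pos hyx hS) two_pos]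
    linarith

theorem stmt_19 (x y : ℝ) (hx : 0 < x) (hxy : x < y) (M : ℕ) (hM : 1 ≤ M)
    (z : ℝ)
    (hz : z = (x * y) ^ M / (∑ j ∈ Finset.range (2 * M + 1), x ^ j * y ^ (2 * M - j))) :
    z ≤ 1 / (2 * M + 1) ∧
      (x * y / (y - x) ^ 2) * (1 - (2 * M + 1) * z) ≤ M * (M + 1) / 2 :=
  stmt_19_general x y hx hxy M z hz
end
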